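/- Let G be a commutative semigroup and let 𝒮 be a Schur ring over G. Call an element α ∈ G an indivisible idempotent if α*α = α and, whenever a*b = α for a, b ∈ G, one has a = α and b = α. Then the set of indivisible idempotents of G is an 𝒮-subset: every block of 𝒮 either consists entirely of indivisible idempotents or contains no indivisible idempotent. -/

import Mathlib

open scoped Pointwise

/-- The simple quantity `[X] = ∑_{x ∈ X} x` in the semigroup algebra `MonoidAlgebra ℚ G`. -/
noncomputable def simpleQty {G : Type*} [Mul G] (X : Finset G) : MonoidAlgebra ℚ G :=
  ∑ x ∈ X, MonoidAlgebra.single x (1 : ℚ)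

/-- A partition of `G` into nonempty finite blocks. -/
def IsPartition {G : Type*} (S : Set (Set G)) : Prop :=
  (∀ X ∈ S, X.Nonempty ∧ X.Finite) ∧ ∀ x : G, ∃! X, X ∈ S ∧ x ∈ X

/-- The ℚ-linear span of the simple quantities of the blocks of `S`. -/
noncomputable def schurSpan {G : Type*} [Mul G] (S : Set (Set G)) :
    Submodule ℚ (MonoidAlgebra ℚ G) :=
  Submodule.span ℚ { z | ∃ X ∈ S, ∃ hX : X.Finite, z = simpleQty hX.toFinset }

/-- A Schur ring over the semigroup `G`. -/
def IsSchurRing {G : Type*} [Semigroup G] (S : Set (Set G)) : Prop :=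
  IsPartition S ∧ ∀ X ∈ S, ∀ Y ∈ S, ∀ (hX : X.Finite) (hY : Y.Finite),
    simpleQty hX.toFinset * simpleQty hY.toFinset ∈ schurSpan S

/-- `A` is an `S`-subset: a union of blocks of `S`. -/
def IsSUnion {G : Type*} (S : Set (Set G)) (A : Set G) : Prop :=
  ∀ X ∈ S, X ⊆ A ∨ X ∩ A = ∅

/-- An indivisible idempotent: `α² = α` and the only factorization of `α` is `α = α * α`. -/
def IsIndivisibleIdem {G : Type*} [Mul G] (α : G) : Prop :=
  α * α = α ∧ ∀ a b : G, a * b = α → a = α ∧ b = α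

open scoped Classical

lemma sum_single_apply {G : Type*} {ι : Type*} (s : Finset ι) (f : ι → G) (x : G) :
    (∑ i ∈ s, MonoidAlgebra.single (f i) (1:ℚ)).coeff x = ((s.filter fun i => f i = x).card : ℚ) := by
  rw [MonoidAlgebra.coeff_sum, Finsupp.finset_sum_apply, ← Finset.sum_boole]
  refine Finset.sum_congr rfl fun i _ => ?_
  simp [MonoidAlgebra.coeff_single, Finsupp.single_apply]

lemma simpleQty_mul {G : Type*} [Mul G] (A B : Finset G) :
    simpleQty A * simpleQty B = ∑ p ∈ A ×ˢ B, MonoidAlgebra.single (p.1 * p.2) (1:ℚ) := by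
  rw [simpleQty, simpleQty, Finset.sum_mul_sum, Finset.sum_product]
  simp [MonoidAlgebra.single_mul_single]

lemma simpleQty_mul3 {G : Type*} [Mul G] (A B C : Finset G) :
    simpleQty A * simpleQty B * simpleQty C
      = ∑ p ∈ (A ×ˢ B) ×ˢ C, MonoidAlgebra.single (p.1.1 * p.1.2 * p.2) (1:ℚ) := by
  rw [simpleQty_mul, simpleQty, Finset.sum_mul_sum, Finset.sum_product]
  simp only [MonoidAlgebra.single_mul_single, one_mul]
  rw [Finset.sum_product, Finset.sum_product]

lemma simpleQty_apply {G : Type*} [Mul G] (F : Finset G) (u : G) :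
    (simpleQty F).coeff u = if u ∈ F then (1:ℚ) else 0 := by
  classical
  rw [simpleQty, MonoidAlgebra.coeff_sum, Finsupp.finset_sum_apply]
  simp [MonoidAlgebra.coeff_single, Finsupp.single_apply]

-- coefficient equality within a block for span elements
lemma span_coeff_eq {G : Type*} [Mul G] {S : Set (Set G)} (hP : IsPartition S)
    {X : Set G} (hX : X ∈ S) {u v : G} (hu : u ∈ X) (hv : v ∈ X)
    {z : MonoidAlgebra ℚ G} (hz : z ∈ schurSpan S) : z.coeff u = z.coeff v := by
  induction hz using Submodule.span_induction with
  | mem w hw =>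
      obtain ⟨C, hC, hCf, rfl⟩ := hw
      rw [simpleQty_apply, simpleQty_apply]
      by_cases huC : u ∈ C
      · have : C = X := (hP.2 u).unique ⟨hC, huC⟩ ⟨hX, hu⟩
        subst this
        simp [hCf.mem_toFinset, huC, hu, hv]
      · have hvC : v ∉ C := by
          intro hvC
          exact huC (((hP.2 v).unique ⟨hC, hvC⟩ ⟨hX, hv⟩) ▸ hu)
        simp [hCf.mem_toFinset, huC, hvC]
  | zero => rfl
  | add a b _ _ iha ihb => rw [MonoidAlgebra.coeff_add, Finsupp.add_apply, Finsupp.add_apply, iha, ihb]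
  | smul r a _ iha => rw [MonoidAlgebra.coeff_smul_apply, MonoidAlgebra.coeff_smul_apply, iha]

lemma span_mul_right {G : Type*} [Semigroup G] {S : Set (Set G)} (hS : IsSchurRing S)
    {X : Set G} (hX : X ∈ S) (hXf : X.Finite)
    {z : MonoidAlgebra ℚ G} (hz : z ∈ schurSpan S) :
    z * simpleQty hXf.toFinset ∈ schurSpan S := by
  induction hz using Submodule.span_induction with
  | mem w hw =>
      obtain ⟨C, hC, hCf, rfl⟩ := hw
      exact hS.2 C hC X hX hCf hXf
  | zero => simp [Submodule.zero_mem]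
  | add a b _ _ iha ihb => rw [add_mul]; exact Submodule.add_mem _ iha ihb
  | smul r a _ iha => rw [smul_mul_assoc]; exact Submodule.smul_mem _ _ iha

/-- in a commutative semigroup, the set of indivisible idempotents is an
`S`-subset of every Schur ring `S`. -/
theorem indivisible_idempotents_SUnion {G : Type*} [CommSemigroup G]
    (S : Set (Set G)) (hS : IsSchurRing S) :
    ∀ X ∈ S, (∀ x ∈ X, IsIndivisibleIdem x) ∨ (∀ x ∈ X, ¬ IsIndivisibleIdem x) := by
  intro X hX
  by_cases h : ∃ α ∈ X, IsIndivisibleIdem α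
  swap
  · right; push_neg at h; exact h
  obtain ⟨α, hαX, hαi⟩ := h
  left
  obtain ⟨hP, hmul⟩ := hS
  have hXfin : X.Finite := (hP.1 X hX).2
  set Xf := hXfin.toFinset with hXfdef
  have hmemXf : ∀ {g : G}, g ∈ Xf ↔ g ∈ X := fun {g} => hXfin.mem_toFinset
  have hαXf : α ∈ Xf := hmemXf.mpr hαX
  have blockEq : ∀ (A B : Set G), A ∈ S → B ∈ S → ∀ (g : G), g ∈ A → g ∈ B → A = B :=
    fun A B hA hB g hgA hgB => (hP.2 g).unique ⟨hA, hgA⟩ ⟨hB, hgB⟩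
  -- coefficient of products as cardinalities
  have coeff_pair : ∀ (Af Bf : Finset G) (y : G),
      (simpleQty Af * simpleQty Bf).coeff y
        = (((Af ×ˢ Bf).filter fun p => p.1 * p.2 = y).card : ℚ) := by
    intro Af Bf y; rw [simpleQty_mul, sum_single_apply]
  -- the α-filter is trivial
  have alpha_filter : ∀ (Af Bf : Finset G),
      ((Af ×ˢ Bf).filter fun p => p.1 * p.2 = α)
        = if α ∈ Af ∧ α ∈ Bf then {(α, α)} else ∅ := by
    intro Af Bf
    ext ⟨a, b⟩
    simp only [Finset.mem_filter, Finset.mem_product]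
    constructor
    · rintro ⟨⟨h1, h2⟩, h3⟩
      obtain ⟨e1, e2⟩ := hαi.2 _ _ h3
      subst e1; subst e2
      simp [h1, h2]
    · intro hmem
      by_cases hc : α ∈ Af ∧ α ∈ Bf
      · simp only [if_pos hc, Finset.mem_singleton, Prod.mk.injEq] at hmem
        obtain ⟨rfl, rfl⟩ := hmem
        exact ⟨hc, hαi.1⟩
      · simp [if_neg hc] at hmem
  -- claim 1: any factorization of an element of X has both factors in X
  have claim1 : ∀ x ∈ X, ∀ a b : G, a * b = x → a ∈ X ∧ b ∈ X := by
    intro x hx a b hab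
    obtain ⟨A, ⟨hA, haA⟩, _⟩ := hP.2 a
    obtain ⟨B, ⟨hB, hbB⟩, _⟩ := hP.2 b
    have hAfin : A.Finite := (hP.1 A hA).2
    have hBfin : B.Finite := (hP.1 B hB).2
    have hz := hmul A hA B hB hAfin hBfin
    have hcoeff : (simpleQty hAfin.toFinset * simpleQty hBfin.toFinset).coeff x
        = (simpleQty hAfin.toFinset * simpleQty hBfin.toFinset).coeff α :=
      span_coeff_eq hP hX hx hαX hz
    rw [coeff_pair, coeff_pair, alpha_filter] at hcoeff
    have hne : ((hAfin.toFinset ×ˢ hBfin.toFinset).filter fun p => p.1 * p.2 = x).Nonempty := by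
      exact ⟨(a, b), by simp [hAfin.mem_toFinset, hBfin.mem_toFinset, haA, hbB, hab]⟩
    by_cases hc : α ∈ hAfin.toFinset ∧ α ∈ hBfin.toFinset
    · have hAX : A = X := blockEq A X hA hX α (hAfin.mem_toFinset.mp hc.1) hαX
      have hBX : B = X := blockEq B X hB hX α (hBfin.mem_toFinset.mp hc.2) hαX
      exact ⟨hAX ▸ haA, hBX ▸ hbB⟩
    · rw [if_neg hc] at hcoeff
      simp only [Finset.card_empty, Nat.cast_zero] at hcoeff
      have : ((hAfin.toFinset ×ˢ hBfin.toFinset).filter fun p => p.1 * p.2 = x).card = 0 := by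
        exact_mod_cast hcoeff
      rw [Finset.card_eq_zero] at this
      exact absurd this (Finset.nonempty_iff_ne_empty.mp hne)
  -- claim 2: each x in X has a unique pair in Xf × Xf multiplying to x
  have claim2 : ∀ x ∈ X, ∃ q : G × G,
      ((Xf ×ˢ Xf).filter fun p => p.1 * p.2 = x) = {q} := by
    intro x hx
    have hz := hmul X hX X hX hXfin hXfin
    have hcoeff : (simpleQty Xf * simpleQty Xf).coeff x = (simpleQty Xf * simpleQty Xf).coeff α :=
      span_coeff_eq hP hX hx hαX hz
    rw [coeff_pair, coeff_pair, alpha_filter, if_pos ⟨hαXf, hαXf⟩] at hcoeff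
    have : ((Xf ×ˢ Xf).filter fun p => p.1 * p.2 = x).card = 1 := by
      have := hcoeff
      simp only [Finset.card_singleton, Nat.cast_one] at this
      exact_mod_cast this
    exact Finset.card_eq_one.mp this
  -- claim 3: each x in X has a triple in Xf³ multiplying to x
  have claim3 : ∀ x ∈ X, ∃ u v w : G, u ∈ Xf ∧ v ∈ Xf ∧ w ∈ Xf ∧ u * v * w = x := by
    intro x hx
    have hz2 := hmul X hX X hX hXfin hXfin
    have hz3 : simpleQty Xf * simpleQty Xf * simpleQty Xf ∈ schurSpan S :=
      span_mul_right ⟨hP, hmul⟩ hX hXfin hz2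
    have hcoeff : (simpleQty Xf * simpleQty Xf * simpleQty Xf).coeff x
        = (simpleQty Xf * simpleQty Xf * simpleQty Xf).coeff α :=
      span_coeff_eq hP hX hx hαX hz3
    rw [simpleQty_mul3, sum_single_apply, sum_single_apply] at hcoeff
    -- α triple filter is {((α,α),α)}
    have hαtriple : (((Xf ×ˢ Xf) ×ˢ Xf).filter fun p => p.1.1 * p.1.2 * p.2 = α)
        = {((α, α), α)} := by
      ext ⟨⟨u, v⟩, w⟩
      simp only [Finset.mem_filter, Finset.mem_product, Finset.mem_singleton, Prod.mk.injEq]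
      constructor
      · rintro ⟨⟨⟨h1, h2⟩, h3⟩, h4⟩
        obtain ⟨e1, e2⟩ := hαi.2 _ _ h4
        obtain ⟨e3, e4⟩ := hαi.2 _ _ e1
        exact ⟨⟨e3, e4⟩, e2⟩
      · rintro ⟨⟨rfl, rfl⟩, rfl⟩
        exact ⟨⟨⟨hαXf, hαXf⟩, hαXf⟩, by rw [hαi.1, hαi.1]⟩
    rw [hαtriple] at hcoeff
    have hcard : (((Xf ×ˢ Xf) ×ˢ Xf).filter fun p => p.1.1 * p.1.2 * p.2 = x).card = 1 := by
      simp only [Finset.card_singleton, Nat.cast_one] at hcoeff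
      exact_mod_cast hcoeff
    obtain ⟨⟨⟨u, v⟩, w⟩, hq⟩ := Finset.card_eq_one.mp hcard
    have : ((u, v), w) ∈ ((Xf ×ˢ Xf) ×ˢ Xf).filter fun p => p.1.1 * p.1.2 * p.2 = x := by
      rw [hq]; exact Finset.mem_singleton_self _
    simp only [Finset.mem_filter, Finset.mem_product] at this
    exact ⟨u, v, w, this.1.1.1, this.1.1.2, this.1.2, this.2⟩
  -- main argument
  intro x hx
  obtain ⟨q, hq⟩ := claim2 x hx
  have hmemq : ∀ a b : G, a * b = x → (a, b) = q := by
    intro a b hab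
    obtain ⟨haX, hbX⟩ := claim1 x hx a b hab
    have : (a, b) ∈ ((Xf ×ˢ Xf).filter fun p => p.1 * p.2 = x) := by
      simp [hmemXf.mpr haX, hmemXf.mpr hbX, hab]
    rw [hq, Finset.mem_singleton] at this
    exact this
  -- q itself is a factorization
  have hqmem : q ∈ ((Xf ×ˢ Xf).filter fun p => p.1 * p.2 = x) := by
    rw [hq]; exact Finset.mem_singleton_self _
  obtain ⟨a, b⟩ := q
  simp only [Finset.mem_filter, Finset.mem_product] at hqmem
  have hab : a * b = x := hqmem.2
  -- commutativity forces a = b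
  have hba : (b, a) = (a, b) := hmemq b a (by rw [mul_comm]; exact hab)
  have haeqb : a = b := (Prod.mk.injEq _ _ _ _ ▸ hba).2
  subst haeqb
  -- triple
  obtain ⟨u, v, w, huX, hvX, hwX, huvw⟩ := claim3 x hx
  have h1 : (u * v, w) = (a, a) := hmemq (u * v) w huvw
  have h2 : (u, v * w) = (a, a) := hmemq u (v * w) (by rw [← mul_assoc]; exact huvw)
  have huv : u * v = a := (Prod.mk.injEq _ _ _ _ ▸ h1).1
  have hu : u = a := (Prod.mk.injEq _ _ _ _ ▸ h2).1
  have hav : a * v = a := by rw [hu] at huv; exact huv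
  have hvx : v * x = x := by
    rw [← hab]
    calc v * (a * a) = (v * a) * a := by rw [mul_assoc]
    _ = (a * v) * a := by rw [mul_comm v a]
    _ = a * a := by rw [hav]
  have h3 : (v, x) = (a, a) := hmemq v x hvx
  have hxa : x = a := (Prod.mk.injEq _ _ _ _ ▸ h3).2
  subst hxa
  constructor
  · exact hab
  · intro c d hcd
    have := hmemq c d hcd
    exact ⟨(Prod.mk.injEq _ _ _ _ ▸ this).1, (Prod.mk.injEq _ _ _ _ ▸ this).2⟩
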